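/- arXiv:1811.02139 — 2 statements merged into one kernel-verified Lean document; each statement's English description precedes it below -/
import Mathlib

section
/- Let T be a complete first-order theory in a countable language L, U a monster model of T (κ-saturated and strongly κ-homogeneous for a sufficiently large cardinal κ), φ(x;y) a partitioned L-formula, and M ≺ N elementary substructures of U with |N| < κ. Let μ ∈ 𝔐_φ(U). If μ is finitely satisfiable over N and μ is M-invariant, then μ is finitely satisfiable over M. -/
/-! If `θ(x;c)` has positive measure but no realization in `M`, saturation yields a realization
`b` of `tp(c/M)` such that `θ(x;b)` has no realization in `N`: otherwise a formula `χ ∈ tp(c/M)`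
and finitely many `n_i ∈ N` would satisfy `χ(y) → ⋁ θ(n_i;y)`, the `n_i` could be replaced by
elements of `M ≺ U`, and then `c` itself would give a realization of `θ(x;c)` in `M`.
Strong homogeneity provides an automorphism over `M` taking `c` to `b`, so by `M`-invariance
`θ(x;b)` has positive measure, contradicting finite satisfiability over `N`. -/

open FirstOrder Cardinal Set Filter Topology

/-! ### Monster model hypotheses -/

/-- `U` is `κ`-saturated: every set of formulas in finitely many object variables with
parameters from a set of size `< κ` which is finitely satisfiable in `U` is realized in `U`. -/
def IsSaturated (L : FirstOrder.Language.{0, 0}) (U : Type) [L.Structure U]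
    (κ : Cardinal.{0}) : Prop :=
  ∀ (ι : Type), #ι < κ → ∀ (c : ι → U) (n : ℕ) (S : Set (L.Formula (Fin n ⊕ ι))),
    (∀ s : Finset (L.Formula (Fin n ⊕ ι)), ↑s ⊆ S →
      ∃ a : Fin n → U, ∀ ψ ∈ s, ψ.Realize (Sum.elim a c)) →
    ∃ a : Fin n → U, ∀ ψ ∈ S, ψ.Realize (Sum.elim a c)

/-- `U` is strongly `κ`-homogeneous: any two tuples of length `< κ` with the same type
are conjugate under an automorphism of `U`. -/
def IsStronglyHomogeneous (L : FirstOrder.Language.{0, 0}) (U : Type) [L.Structure U]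
    (κ : Cardinal.{0}) : Prop :=
  ∀ (ι : Type), #ι < κ → ∀ a b : ι → U,
    (∀ ψ : L.Formula ι, ψ.Realize a ↔ ψ.Realize b) →
    ∃ σ : U ≃[L] U, ∀ i, σ (a i) = b i

variable {L : FirstOrder.Language.{0, 0}}

/-! ### NIP formulas -/

/-- The partitioned formula `φ(x;y)` has IP in `U`. -/
def FormulaHasIP (U : Type) [L.Structure U] {nx ny : ℕ}
    (φ : L.Formula (Fin nx ⊕ Fin ny)) : Prop :=
  ∀ n : ℕ, ∃ A : Finset (Fin nx → U), n ≤ A.card ∧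
    ∀ K ⊆ A, ∃ bK : Fin ny → U, ∀ c ∈ A, (φ.Realize (Sum.elim c bK) ↔ c ∈ K)

/-- The partitioned formula `φ(x;y)` is NIP in `U`. -/
def FormulaIsNIP (U : Type) [L.Structure U] {nx ny : ℕ}
    (φ : L.Formula (Fin nx ⊕ Fin ny)) : Prop :=
  ¬ FormulaHasIP U φ

/-! ### `φ`-definable sets and local Keisler measures -/

/-- The instance `φ(x;b)` of `φ(x;y)`, as a subset of `U^x`. -/
def phiSet {U : Type} [L.Structure U] {nx ny : ℕ}
    (φ : L.Formula (Fin nx ⊕ Fin ny)) (b : Fin ny → U) : Set (Fin nx → U) :=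
  { a | φ.Realize (Sum.elim a b) }

/-- The Boolean algebra `Def_φ(U)` of subsets of `U^x` generated by the instances
`φ(x;b)`, `b ∈ U^y`. -/
inductive InPhiAlg {U : Type} [L.Structure U] {nx ny : ℕ}
    (φ : L.Formula (Fin nx ⊕ Fin ny)) : Set (Fin nx → U) → Prop
  | basic (b : Fin ny → U) : InPhiAlg φ (phiSet φ b)
  | empty : InPhiAlg φ ∅
  | compl {s : Set (Fin nx → U)} : InPhiAlg φ s → InPhiAlg φ sᶜ
  | union {s t : Set (Fin nx → U)} : InPhiAlg φ s → InPhiAlg φ t → InPhiAlg φ (s ∪ t)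

/-- A finitely additive probability measure on `Def_φ(U)`, i.e. an element of `𝔐_φ(U)`. -/
structure KeislerMeasure (U : Type) [L.Structure U] {nx ny : ℕ}
    (φ : L.Formula (Fin nx ⊕ Fin ny)) where
  toFun : Set (Fin nx → U) → ℝ
  nonneg : ∀ s, InPhiAlg φ s → 0 ≤ toFun s
  total : toFun Set.univ = 1
  additive : ∀ s t, InPhiAlg φ s → InPhiAlg φ t → Disjoint s t →
    toFun (s ∪ t) = toFun s + toFun t

/-! ### Types over `M` and the Stone space `S_y(M)` -/

/-- `b` and `c` have the same type over `M`. -/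
def SameTypeOver {U : Type} [L.Structure U] (M : L.ElementarySubstructure U) {n : ℕ}
    (b c : Fin n → U) : Prop :=
  ∀ (k : ℕ) (ψ : L.Formula (Fin n ⊕ Fin k)) (m : Fin k → M),
    (ψ.Realize (Sum.elim b (fun i => (m i : U))) ↔
      ψ.Realize (Sum.elim c (fun i => (m i : U))))

/-- The setoid of "equality of type over `M`". -/
def typeSetoid {U : Type} [L.Structure U] (M : L.ElementarySubstructure U) (n : ℕ) :
    Setoid (Fin n → U) where
  r := SameTypeOver M
  iseqv := ⟨fun _ _ _ _ => Iff.rfl, fun h k ψ m => (h k ψ m).symm,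
    fun h h' k ψ m => (h k ψ m).trans (h' k ψ m)⟩

/-- The space `S_n(M)` of complete `n`-types over `M` (realized in the monster `U`). -/
def TypeSpace {U : Type} [L.Structure U] (M : L.ElementarySubstructure U) (n : ℕ) : Type :=
  Quotient (typeSetoid M n)

/-- The Stone topology on `S_n(M)`, generated by the sets of types containing a given
formula over `M`. -/
instance typeSpaceTopology {U : Type} [L.Structure U] (M : L.ElementarySubstructure U)
    (n : ℕ) : TopologicalSpace (TypeSpace M n) :=
  TopologicalSpace.generateFrom
    { S | ∃ (k : ℕ) (ψ : L.Formula (Fin n ⊕ Fin k)) (m : Fin k → M),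
        S = { p : TypeSpace M n | ∃ b : Fin n → U,
          Quotient.mk (typeSetoid M n) b = p ∧
            ψ.Realize (Sum.elim b (fun i => (m i : U))) } }

/-- The function `F_a^φ : S_y(M) → ℝ`, the indicator of `φ(a;y) ∈ p` for `a ∈ M^x`. -/
noncomputable def FunF {U : Type} [L.Structure U] {nx ny : ℕ}
    (φ : L.Formula (Fin nx ⊕ Fin ny)) (M : L.ElementarySubstructure U)
    (a : Fin nx → M) (p : TypeSpace M ny) : ℝ :=
  Set.indicator
    { q : TypeSpace M ny | ∃ b : Fin ny → U, Quotient.mk (typeSetoid M ny) b = q ∧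
        φ.Realize (Sum.elim (fun i => (a i : U)) b) } (fun _ => 1) p

/-- The family `𝔽_M^φ = {F_a^φ : a ∈ M^x}` of functions on `S_y(M)`. -/
def FamilyF {U : Type} [L.Structure U] {nx ny : ℕ}
    (φ : L.Formula (Fin nx ⊕ Fin ny)) (M : L.ElementarySubstructure U) :
    Set (TypeSpace M ny → ℝ) :=
  Set.range (fun a : Fin nx → M => FunF φ M a)

/-- The function `F_μ^φ : S_y(M) → ℝ`, `p ↦ μ(φ(x;b))` for `b ⊨ p` (well defined when `μ`
is `φ`-invariant over `M`). -/
noncomputable def FunMu {U : Type} [L.Structure U] {nx ny : ℕ}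
    (φ : L.Formula (Fin nx ⊕ Fin ny)) (M : L.ElementarySubstructure U)
    (μ : KeislerMeasure U φ) (p : TypeSpace M ny) : ℝ :=
  μ.toFun (phiSet φ (Quotient.out p))

/-! ### Properties of local Keisler measures -/

/-- `μ` is `φ`-invariant over `M`. -/
def PhiInvariant {U : Type} [L.Structure U] {nx ny : ℕ}
    (φ : L.Formula (Fin nx ⊕ Fin ny)) (M : L.ElementarySubstructure U)
    (μ : KeislerMeasure U φ) : Prop :=
  ∀ b c : Fin ny → U, SameTypeOver M b c → μ.toFun (phiSet φ b) = μ.toFun (phiSet φ c)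

/-- `μ` is `M`-invariant: automorphisms of `U` fixing `M` pointwise preserve the measure of
every set in `Def_φ(U)`. -/
def MInvariant {U : Type} [L.Structure U] {nx ny : ℕ}
    (φ : L.Formula (Fin nx ⊕ Fin ny)) (M : L.ElementarySubstructure U)
    (μ : KeislerMeasure U φ) : Prop :=
  ∀ σ : U ≃[L] U, (∀ m : M, σ (m : U) = (m : U)) → ∀ s : Set (Fin nx → U), InPhiAlg φ s →
    μ.toFun ((fun a : Fin nx → U => (σ : U → U) ∘ a) '' s) = μ.toFun s

/-- `μ` is `φ`-definable over `M` (Definition 4.3(i)). -/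
def PhiDefinable {U : Type} [L.Structure U] {nx ny : ℕ}
    (φ : L.Formula (Fin nx ⊕ Fin ny)) (M : L.ElementarySubstructure U)
    (μ : KeislerMeasure U φ) : Prop :=
  ∀ ε : ℝ, 0 < ε → ∃ (m k : ℕ) (ψ : Fin m → L.Formula (Fin ny ⊕ Fin k)) (c : Fin k → M),
    (∀ b : Fin ny → U, ∃! i : Fin m, (ψ i).Realize (Sum.elim b (fun j => (c j : U)))) ∧
    ∀ i : Fin m, ∀ e e' : Fin ny → U,
      (ψ i).Realize (Sum.elim e (fun j => (c j : U))) →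
      (ψ i).Realize (Sum.elim e' (fun j => (c j : U))) →
      |μ.toFun (phiSet φ e) - μ.toFun (phiSet φ e')| < ε

/-- `μ` is finitely satisfiable over `M`: every `φ`-formula of positive measure has a
realization in `M`. -/
def FinSat {U : Type} [L.Structure U] {nx ny : ℕ}
    (φ : L.Formula (Fin nx ⊕ Fin ny)) (M : L.ElementarySubstructure U)
    (μ : KeislerMeasure U φ) : Prop :=
  ∀ s : Set (Fin nx → U), InPhiAlg φ s → 0 < μ.toFun s →
    ∃ a : Fin nx → M, (fun i => (a i : U)) ∈ s

/-- `μ` is `φ`-generically stable over `M` (Definition 4.3(iii)). -/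
def PhiGenericallyStable {U : Type} [L.Structure U] {nx ny : ℕ}
    (φ : L.Formula (Fin nx ⊕ Fin ny)) (M : L.ElementarySubstructure U)
    (μ : KeislerMeasure U φ) : Prop :=
  PhiDefinable φ M μ ∧ FinSat φ M μ

/-! ### The algebra `Δ_φ` of partitioned formulas and full generic stability -/

/-- The family `Δ_φ` of Boolean combinations `θ(x; y_1, ..., y_k)` of the formulas
`φ(x;y_i)`, viewed as set-valued maps on tuples of parameters. -/
inductive InDeltaPhi {U : Type} [L.Structure U] {nx ny : ℕ}
    (φ : L.Formula (Fin nx ⊕ Fin ny)) :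
    (k : ℕ) → ((Fin k → Fin ny → U) → Set (Fin nx → U)) → Prop
  | inst (k : ℕ) (j : Fin k) : InDeltaPhi φ k (fun bs => phiSet φ (bs j))
  | empty (k : ℕ) : InDeltaPhi φ k (fun _ => ∅)
  | compl {k : ℕ} {G} : InDeltaPhi φ k G → InDeltaPhi φ k (fun bs => (G bs)ᶜ)
  | union {k : ℕ} {G H} : InDeltaPhi φ k G → InDeltaPhi φ k H →
      InDeltaPhi φ k (fun bs => G bs ∪ H bs)

/-- `μ` is definable over `M` (Definition 4.11): for every `θ(x;ȳ) ∈ Δ_φ` and `ε > 0` there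
is a partition of `U^ȳ` into `M`-definable pieces on which `μ(θ(x;·))` varies less than `ε`. -/
def DefinableOver {U : Type} [L.Structure U] {nx ny : ℕ}
    (φ : L.Formula (Fin nx ⊕ Fin ny)) (M : L.ElementarySubstructure U)
    (μ : KeislerMeasure U φ) : Prop :=
  ∀ (k : ℕ) (G : (Fin k → Fin ny → U) → Set (Fin nx → U)), InDeltaPhi φ k G →
    ∀ ε : ℝ, 0 < ε →
      ∃ (m j : ℕ) (ρ : Fin m → L.Formula ((Fin k × Fin ny) ⊕ Fin j)) (c : Fin j → M),
        (∀ bs : Fin k → Fin ny → U, ∃! i : Fin m,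
          (ρ i).Realize (Sum.elim (fun q => bs q.1 q.2) (fun t => (c t : U)))) ∧
        ∀ i : Fin m, ∀ e e' : Fin k → Fin ny → U,
          (ρ i).Realize (Sum.elim (fun q => e q.1 q.2) (fun t => (c t : U))) →
          (ρ i).Realize (Sum.elim (fun q => e' q.1 q.2) (fun t => (c t : U))) →
          |μ.toFun (G e) - μ.toFun (G e')| < ε

/-- `μ` is generically stable over `M` (Definition 4.11). -/
def GenericallyStable {U : Type} [L.Structure U] {nx ny : ℕ}
    (φ : L.Formula (Fin nx ⊕ Fin ny)) (M : L.ElementarySubstructure U)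
    (μ : KeislerMeasure U φ) : Prop :=
  DefinableOver φ M μ ∧ FinSat φ M μ

/-- The average measure `Av(ā)` of the finite sequence `ā = (a_1, ..., a_n)`. -/
noncomputable def Av {α : Type*} {n : ℕ} (a : Fin n → α) (s : Set α) : ℝ :=
  (∑ i : Fin n, Set.indicator s (fun _ => (1 : ℝ)) (a i)) / n

/-- `μ` is finitely approximable over `M` (Definition 4.12). -/
def FinApprox {U : Type} [L.Structure U] {nx ny : ℕ}
    (φ : L.Formula (Fin nx ⊕ Fin ny)) (M : L.ElementarySubstructure U)
    (μ : KeislerMeasure U φ) : Prop :=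
  ∀ (k : ℕ) (G : (Fin k → Fin ny → U) → Set (Fin nx → U)), InDeltaPhi φ k G →
    ∀ ε : ℝ, 0 < ε → ∃ (n : ℕ), 0 < n ∧ ∃ a : Fin n → (Fin nx → M),
      ∀ bs : Fin k → Fin ny → U,
        |μ.toFun (G bs) - Av (fun i => fun q => ((a i q : U))) (G bs)| < ε

/-! ### Convexity and dependence notions -/

/-- The set of all finite rational convex combinations of elements of `A`. -/
def ratConv {E : Type*} [AddCommMonoid E] [Module ℝ E] (A : Set E) : Set E :=
  { z | ∃ (n : ℕ) (r : Fin n → ℚ) (v : Fin n → E),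
      (∀ i, 0 < r i) ∧ (∑ i, ((r i : ℝ))) = 1 ∧ (∀ i, v i ∈ A) ∧ z = ∑ i, ((r i : ℝ)) • v i }

/-- A two-variable map `g : X × Y → ℝ` is `(r,ε)`-independent if for every `n` there is a
set `A ⊆ X` with `|A| > n` which `g` `(r,ε)`-shatters; `g` is independent if it is
`(r,ε)`-independent for some `r ∈ (0,1)` and `ε > 0`, and dependent otherwise. -/
def MapIndependent {X Y : Type*} (g : X → Y → ℝ) : Prop :=
  ∃ r : ℝ, r ∈ Set.Ioo (0 : ℝ) 1 ∧ ∃ ε : ℝ, 0 < ε ∧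
    ∀ n : ℕ, ∃ A : Finset X, n < A.card ∧
      ∀ K ⊆ A, ∃ b : Y, ∀ a ∈ A, (g a b ≤ r ↔ a ∈ K) ∧ (r + ε ≤ g a b ↔ a ∉ K)

/-- A set `A ⊆ ℝ^Y` is sequentially independent if there are a sequence `(f_n)` of elements
of `A`, a real `r`, and `ε > 0` such that for every `I ⊆ ℕ` there is `b_I ∈ Y` with
`{n : f_n(b_I) ≤ r} = I` and `{n : f_n(b_I) ≥ r + ε} = ℕ ∖ I`. -/
def SeqIndependent {Y : Type*} (A : Set (Y → ℝ)) : Prop :=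
  ∃ f : ℕ → (Y → ℝ), (∀ n, f n ∈ A) ∧ ∃ r ε : ℝ, 0 < ε ∧
    ∀ I : Set ℕ, ∃ b : Y, {n : ℕ | f n b ≤ r} = I ∧ {n : ℕ | r + ε ≤ f n b} = Iᶜ

open FirstOrder.Language

namespace FirstOrder.Language.ElementarySubstructure

variable {U : Type} [L.Structure U] (M : L.ElementarySubstructure U)

theorem exists_realize_sum_elim_of_exists {α β : Type*} [Finite β] (ψ : L.Formula (α ⊕ β))
    (v : α → M) (h : ∃ w : β → U, ψ.Realize (Sum.elim (((↑) : M → U) ∘ v) w)) :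
    ∃ w : β → M, ψ.Realize (Sum.elim (((↑) : M → U) ∘ v) (((↑) : M → U) ∘ w)) := by
  have hU : (ψ.iExs β).Realize (M.subtype ∘ v) := Formula.realize_iExs.2 h
  obtain ⟨w, hw⟩ := Formula.realize_iExs.1 ((M.subtype.map_formula _ v).1 hU)
  refine ⟨w, ?_⟩
  rw [← M.subtype.map_formula, Sum.comp_elim] at hw
  exact hw

theorem exists_realize_forall_not_realize {α β ι : Type*} [Finite α] [Finite β] [Finite ι]
    (Θ : L.Formula (α ⊕ β)) {c : β → U}
    (hΘ : ∀ m : α → M, ¬ Θ.Realize (Sum.elim (((↑) : M → U) ∘ m) c))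
    (χ : L.Formula (β ⊕ M)) (hχ : χ.Realize (Sum.elim c (↑))) (n : ι → α → U) :
    ∃ b : β → U, χ.Realize (Sum.elim b (↑)) ∧ ∀ i, ¬ Θ.Realize (Sum.elim (n i) b) := by
  by_contra! h
  let ξ : L.Formula (M ⊕ (ι × α)) :=
    ((χ.relabel (Sum.elim Sum.inr (Sum.inl ∘ Sum.inl))).imp
      (Formula.iSup fun i => Θ.relabel
        (Sum.elim (fun a => Sum.inl (Sum.inr (i, a))) Sum.inr))).iAlls β
  have hξ : ∀ z : ι × α → U, ξ.Realize (Sum.elim (↑) z) ↔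
      ∀ b, χ.Realize (Sum.elim b (↑)) → ∃ i, Θ.Realize (Sum.elim (fun a => z (i, a)) b) := by
    intro z
    have e₁ : ∀ b : β → U,
        Sum.elim (Sum.elim ((↑) : M → U) z) b ∘ Sum.elim Sum.inr (Sum.inl ∘ Sum.inl) =
          Sum.elim b ((↑) : M → U) := fun b => by ext (x | x) <;> rfl
    have e₂ : ∀ (b : β → U) (i : ι), Sum.elim (Sum.elim ((↑) : M → U) z) b ∘
        Sum.elim (fun a => Sum.inl (Sum.inr (i, a))) Sum.inr = Sum.elim (fun a => z (i, a)) b :=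
      fun b i => by ext (x | x) <;> rfl
    simp only [ξ, Formula.realize_iAlls, Formula.realize_imp, Formula.realize_relabel,
      Formula.realize_iSup, e₁, e₂]
  obtain ⟨w, hw⟩ := M.exists_realize_sum_elim_of_exists ξ id
    ⟨fun p => n p.1 p.2, (hξ _).2 fun b hb => h b hb⟩
  obtain ⟨i, hi⟩ := (hξ _).1 hw c hχ
  exact hΘ (fun a => w (i, a)) hi

end FirstOrder.Language.ElementarySubstructure

section

variable {U : Type} [L.Structure U]

theorem exists_realize_type_forall_not_realize {κ : Cardinal.{0}} (hsat : IsSaturated L U κ)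
    {M N : L.ElementarySubstructure U} (hMN : M.toSubstructure ≤ N.toSubstructure)
    (hN : #N < κ) {α : Type*} [Finite α] {K : ℕ} (Θ : L.Formula (α ⊕ Fin K)) {c : Fin K → U}
    (hΘ : ∀ m : α → M, ¬ Θ.Realize (Sum.elim (((↑) : M → U) ∘ m) c)) :
    ∃ b : Fin K → U,
      (∀ χ : L.Formula (Fin K ⊕ M), χ.Realize (Sum.elim c (↑)) → χ.Realize (Sum.elim b (↑))) ∧
      ∀ n : α → N, ¬ Θ.Realize (Sum.elim (((↑) : N → U) ∘ n) b) := by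
  classical
  let toN : L.Formula (Fin K ⊕ M) → L.Formula (Fin K ⊕ N) :=
    Formula.relabel (Sum.map id fun m => ⟨m, hMN m.2⟩)
  let notΘ : (α → N) → L.Formula (Fin K ⊕ N) := fun n =>
    Θ.not.relabel (Sum.elim (Sum.inr ∘ n) Sum.inl)
  have realize_toN : ∀ (b : Fin K → U) χ,
      (toN χ).Realize (Sum.elim b (↑)) ↔ χ.Realize (Sum.elim b (↑)) := fun b χ => by
    simp only [toN, Formula.realize_relabel, Sum.elim_comp_map]
    rfl
  have realize_notΘ : ∀ (b : Fin K → U) n,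
      (notΘ n).Realize (Sum.elim b (↑)) ↔ ¬ Θ.Realize (Sum.elim (((↑) : N → U) ∘ n) b) :=
    fun b n => by
      simp only [notΘ, Formula.realize_relabel, Formula.realize_not, Sum.comp_elim,
        ← Function.comp_assoc, Sum.elim_comp_inl, Sum.elim_comp_inr]
  let S₁ := toN '' {χ | χ.Realize (Sum.elim c (↑))}
  let S₂ := notΘ '' univ
  obtain ⟨b, hb⟩ := hsat N hN (↑) K (S₁ ∪ S₂) fun s hs => by
    obtain ⟨t₁, ht₁, hs₁⟩ := Finset.subset_set_image_iff.1
      (fun ψ hψ => (Finset.mem_filter.1 hψ).2 : ↑(s.filter (· ∈ S₁)) ⊆ S₁)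
    obtain ⟨t₂, -, hs₂⟩ := Finset.subset_set_image_iff.1
      (fun ψ hψ => ((hs (Finset.mem_filter.1 hψ).1).resolve_left (Finset.mem_filter.1 hψ).2) :
        ↑(s.filter (· ∉ S₁)) ⊆ S₂)
    obtain ⟨b, hχ, hn⟩ := M.exists_realize_forall_not_realize Θ hΘ
      (Formula.iInf fun χ : t₁ => χ.1) (Formula.realize_iInf.2 fun χ => ht₁ χ.2)
      (fun n : t₂ => ((↑) : N → U) ∘ n.1)
    refine ⟨b, fun ψ hψ => ?_⟩
    by_cases hψ₁ : ψ ∈ S₁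
    · obtain ⟨χ, hχt, rfl⟩ := Finset.mem_image.1 (hs₁ ▸ Finset.mem_filter.2 ⟨hψ, hψ₁⟩)
      exact (realize_toN b χ).2 (Formula.realize_iInf.1 hχ ⟨χ, hχt⟩)
    · obtain ⟨n, hnt, rfl⟩ := Finset.mem_image.1 (hs₂ ▸ Finset.mem_filter.2 ⟨hψ, hψ₁⟩)
      exact (realize_notΘ b n).2 (hn ⟨n, hnt⟩)
  exact ⟨b, fun χ hχ => (realize_toN b χ).1 (hb _ (Or.inl ⟨χ, hχ, rfl⟩)),
    fun n => (realize_notΘ b n).1 (hb _ (Or.inr ⟨n, trivial, rfl⟩))⟩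

theorem exists_equiv_fixing_of_realize_type {κ : Cardinal.{0}}
    (hhom : IsStronglyHomogeneous L U κ) (hκ : ℵ₀ ≤ κ) {M : L.ElementarySubstructure U}
    (hM : #M < κ) {K : ℕ} {c b : Fin K → U}
    (h : ∀ χ : L.Formula (Fin K ⊕ M), χ.Realize (Sum.elim c (↑)) → χ.Realize (Sum.elim b (↑))) :
    ∃ σ : U ≃[L] U, (∀ m : M, σ m = m) ∧ (σ : U → U) ∘ c = b := by
  have hcard : #(M ⊕ Fin K) < κ := by
    rw [mk_sum, lift_id, lift_id, mk_fin]
    exact add_lt_of_lt hκ hM ((natCast_lt_aleph0 (n := K)).trans_le hκ)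
  have realize_swap : ∀ (ψ : L.Formula (M ⊕ Fin K)) (d : Fin K → U),
      ψ.Realize (Sum.elim (↑) d) ↔ (ψ.relabel Sum.swap).Realize (Sum.elim d (↑)) := by
    intro ψ d
    rw [Formula.realize_relabel, Sum.elim_swap]
  obtain ⟨σ, hσ⟩ := hhom _ hcard (Sum.elim (↑) c) (Sum.elim (↑) b) fun ψ => by
    refine ⟨fun hc => (realize_swap ψ b).2 (h _ ((realize_swap ψ c).1 hc)), fun hb => ?_⟩
    by_contra hc
    have := h (ψ.relabel Sum.swap).not (Formula.realize_not.2 (mt (realize_swap ψ c).2 hc))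
    exact Formula.realize_not.1 this ((realize_swap ψ b).1 hb)
  exact ⟨σ, fun m => hσ (Sum.inl m), funext fun k => hσ (Sum.inr k)⟩

theorem image_comp_setOf_realize (σ : U ≃[L] U) {α β : Type*} (Θ : L.Formula (α ⊕ β))
    (c : β → U) :
    (fun a => (σ : U → U) ∘ a) '' {a | Θ.Realize (Sum.elim a c)} =
      {a | Θ.Realize (Sum.elim a ((σ : U → U) ∘ c))} := by
  rw [Set.image_eq_preimage_of_inverse (g := fun a => (σ.symm : U → U) ∘ a)
    (fun a => by ext; simp) (fun a => by ext; simp)]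
  ext a
  simp only [mem_preimage, mem_ofPred_eq]
  rw [← StrongHomClass.realize_formula σ, Sum.comp_elim, ← Function.comp_assoc,
    show (σ : U → U) ∘ σ.symm = id from funext σ.apply_symm_apply, Function.id_comp]

end

namespace InPhiAlg

variable {U : Type} [L.Structure U] {nx ny : ℕ} {φ : L.Formula (Fin nx ⊕ Fin ny)}
  {s : Set (Fin nx → U)}

theorem exists_eq_setOf_realize (hs : InPhiAlg φ s) :
    ∃ (K : ℕ) (c : Fin K → U) (Θ : L.Formula (Fin nx ⊕ Fin K)),
      s = {a | Θ.Realize (Sum.elim a c)} := by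
  induction hs with
  | basic b => exact ⟨ny, b, φ, rfl⟩
  | empty => exact ⟨0, Fin.elim0, ⊥, by ext; simp [Formula.Realize]⟩
  | compl _ ih =>
    obtain ⟨K, c, Θ, rfl⟩ := ih
    exact ⟨K, c, Θ.not, by ext; simp⟩
  | union _ _ ih₁ ih₂ =>
    obtain ⟨K₁, c₁, Θ₁, rfl⟩ := ih₁
    obtain ⟨K₂, c₂, Θ₂, rfl⟩ := ih₂
    refine ⟨K₁ + K₂, Fin.append c₁ c₂,
      Θ₁.relabel (Sum.map id (Fin.castAdd K₂)) ⊔ Θ₂.relabel (Sum.map id (Fin.natAdd K₁)), ?_⟩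
    have hc₁ : Fin.append c₁ c₂ ∘ Fin.castAdd K₂ = c₁ := funext (Fin.append_left c₁ c₂)
    have hc₂ : Fin.append c₁ c₂ ∘ Fin.natAdd K₁ = c₂ := funext (Fin.append_right c₁ c₂)
    ext a
    simp only [mem_union, mem_ofPred_eq, Formula.realize_sup, Formula.realize_relabel,
      Sum.elim_comp_map, Function.comp_id, hc₁, hc₂]

theorem image_comp (σ : U ≃[L] U) (hs : InPhiAlg φ s) :
    InPhiAlg φ ((fun a => (σ : U → U) ∘ a) '' s) := by
  induction hs with
  | basic b => exact image_comp_setOf_realize σ φ b ▸ basic _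
  | empty => exact (image_empty _).symm ▸ empty
  | compl _ ih =>
    have hσ : Function.Bijective fun a : Fin nx → U => (σ : U → U) ∘ a := σ.bijective.comp_left
    exact (image_compl_eq hσ).symm ▸ ih.compl
  | union _ _ ih₁ ih₂ => exact (image_union _ _ _).symm ▸ ih₁.union ih₂

end InPhiAlg

theorem stmt_14_general
    {L : FirstOrder.Language.{0, 0}}
    {U : Type} [L.Structure U]
    (κ : Cardinal.{0}) (hκ : Cardinal.aleph0 < κ)
    (hsat : IsSaturated L U κ) (hhom : IsStronglyHomogeneous L U κ)
    {nx ny : ℕ} (φ : L.Formula (Fin nx ⊕ Fin ny))    (M N : L.ElementarySubstructure U) (hMN : M.toSubstructure ≤ N.toSubstructure)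
    (hN : #N < κ)
    (μ : KeislerMeasure U φ)
    (hfsN : FinSat φ N μ) (hinv : MInvariant φ M μ) :
    FinSat φ M μ := by
  intro s hs hpos
  obtain ⟨K, c, Θ, rfl⟩ := hs.exists_eq_setOf_realize
  by_contra! hM
  obtain ⟨b, hcb, hbN⟩ := exists_realize_type_forall_not_realize hsat hMN hN Θ hM
  obtain ⟨σ, hσM, rfl⟩ := exists_equiv_fixing_of_realize_type hhom hκ.le
    ((mk_le_mk_of_subset hMN).trans_lt hN) hcb
  have hσs := hinv σ hσM _ hs
  rw [image_comp_setOf_realize] at hσs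
  obtain ⟨n, hn⟩ := hfsN _ (image_comp_setOf_realize σ Θ c ▸ hs.image_comp σ) (hσs ▸ hpos)
  exact hbN n hn

/-- **Proposition 4.14.** Let `M ≺ N ≺ U`. If `μ ∈ 𝔐_φ(U)` is finitely satisfiable over
`N` and `M`-invariant, then `μ` is finitely satisfiable over `M`. -/
theorem stmt_14
    {L : FirstOrder.Language.{0, 0}} (T : L.Theory) (hT : T.IsComplete)
    (hL : L.card ≤ Cardinal.aleph0)
    {U : Type} [L.Structure U] [Nonempty U] (hUT : T.Model U)
    (κ : Cardinal.{0}) (hκ : Cardinal.aleph0 < κ) (hreg : κ.IsRegular)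
    (hsat : IsSaturated L U κ) (hhom : IsStronglyHomogeneous L U κ)
    {nx ny : ℕ} (φ : L.Formula (Fin nx ⊕ Fin ny))    (M N : L.ElementarySubstructure U) (hMN : M.toSubstructure ≤ N.toSubstructure)
    (hN : #N < κ)
    (μ : KeislerMeasure U φ)
    (hfsN : FinSat φ N μ) (hinv : MInvariant φ M μ) :
    FinSat φ M μ :=
  stmt_14_general κ hκ hsat hhom φ M N hMN hN μ hfsN hinv
end

section
/- Let T be a complete first-order theory in a countable language L, U a monster model of T (κ-saturated and strongly κ-homogeneous for a sufficiently large cardinal κ), M an elementary substructure of U with |M| < κ, and φ(x;y) a partitioned L-formula. Let μ ∈ 𝔐_φ(U). If μ is generically stable over M, then there exists an elementary substructure M_0 ≺ M with |M_0| = ℵ_0 such that μ is generically stable over M_0. -/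
open FirstOrder Cardinal Set Filter Topology

variable {L : FirstOrder.Language.{0, 0}}

/-!
For each `θ ∈ Δ_φ` and `ε > 0`, saturation turns definability and finite satisfiability over `M`
into a finite `ε`-net in `M^x`: finitely many tuples meeting every instance `θ(x;b̄)` of measure
`≥ ε`. Otherwise one piece of a definable partition would contain, for every finite `F ⊆ M^x`, a
large instance avoiding `F`; a realisation of `{¬θ(a;ȳ) : a ∈ M^x}` in that piece then has
positive measure but no point in `M`. So for each of the countably many pairs
`(θ, 1/(n+1))` both the definability partition and the net use only finitely many parameters
from `M`, and a countable `M₀ ≺ M` containing all of them (downward Löwenheim–Skolem) works.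
-/

namespace FirstOrder.Language

variable {U : Type} [L.Structure U]

theorem ElementaryEmbedding.isElementary_range {N : Type} [L.Structure N] (f : N ↪ₑ[L] U) :
    f.toEmbedding.toHom.range.IsElementary := by
  intro n ψ x
  set e := f.toEmbedding.equivRange
  obtain ⟨y, rfl⟩ : ∃ y : Fin n → N, e ∘ y = x :=
    ⟨e.symm ∘ x, funext fun i => e.apply_symm_apply (x i)⟩
  have hcoe : ((↑) : f.toEmbedding.toHom.range → U) ∘ e ∘ y = f ∘ y := by
    ext i
    exact Embedding.equivRange_apply _ (y i)
  rw [hcoe, f.map_formula, StrongHomClass.realize_formula e]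

theorem ElementarySubstructure.exists_le_card_eq (M : L.ElementarySubstructure U) (s : Set U)
    (hsM : s ⊆ M) (κ : Cardinal.{0}) (h1 : ℵ₀ ≤ κ) (h2 : #s ≤ κ) (h3 : L.card ≤ κ)
    (h4 : κ ≤ #M) :
    ∃ M₀ : L.ElementarySubstructure U,
      M₀.toSubstructure ≤ M.toSubstructure ∧ #M₀ = κ ∧ s ⊆ M₀ := by
  set s' : Set M := (↑) ⁻¹' s
  have hs' : #s' ≤ κ := (Cardinal.mk_preimage_of_injective _ _ Subtype.coe_injective).trans h2
  obtain ⟨N, hsN, hN⟩ := exists_elementarySubstructure_card_eq L s' κ h1 (by simpa using hs')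
    (by simpa using h3) (by simpa using h4)
  let f : N ↪ₑ[L] U := M.subtype.comp N.subtype
  refine ⟨⟨_, f.isElementary_range⟩, ?_, ?_, ?_⟩
  · rintro _ ⟨x, rfl⟩
    exact (x : M).2
  · exact (Cardinal.mk_congr f.toEmbedding.equivRange.toEquiv).symm.trans (by simpa using hN)
  · intro u hu
    obtain ⟨x, rfl⟩ : ∃ x : M, (x : U) = u := ⟨⟨u, hsM hu⟩, rfl⟩
    exact ⟨⟨x, hsN hu⟩, rfl⟩

end FirstOrder.Language

/-- Syntax trees of the elements of `Δ_φ` in `k` parameter blocks; unlike the predicate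
`InDeltaPhi`, they form a countable type. -/
inductive DeltaTerm (k : ℕ) : Type
  | inst (j : Fin k)
  | empty
  | compl (t : DeltaTerm k)
  | union (s t : DeltaTerm k)
  deriving Countable

namespace DeltaTerm

variable {U : Type} [L.Structure U] {nx ny k : ℕ}
  (φ : L.Formula (Fin nx ⊕ Fin ny))

def eval : DeltaTerm k → (Fin k → Fin ny → U) → Set (Fin nx → U)
  | inst j, bs => phiSet φ (bs j)
  | empty, _ => ∅
  | compl t, bs => (eval t bs)ᶜ
  | union s t, bs => eval s bs ∪ eval t bs

theorem inDeltaPhi_eval (t : DeltaTerm k) :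
    InDeltaPhi φ k (t.eval φ : _ → Set (Fin nx → U)) := by
  induction t with
  | inst j => exact .inst k j
  | empty => exact .empty k
  | compl t ih => exact .compl ih
  | union s t ihs iht => exact .union ihs iht

theorem inPhiAlg_eval (t : DeltaTerm k) (bs : Fin k → Fin ny → U) :
    InPhiAlg φ (t.eval φ bs) := by
  induction t with
  | inst j => exact .basic (bs j)
  | empty => exact .empty
  | compl t ih => exact .compl ih
  | union s t ihs iht => exact .union ihs iht

variable {φ} in
theorem exists_eval_eq_of_inDeltaPhi {G : (Fin k → Fin ny → U) → Set (Fin nx → U)}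
    (h : InDeltaPhi φ k G) : ∃ t : DeltaTerm k, t.eval φ = G := by
  induction h with
  | inst j => exact ⟨inst j, rfl⟩
  | empty => exact ⟨empty, rfl⟩
  | compl _ ih =>
    obtain ⟨t, rfl⟩ := ih
    exact ⟨compl t, rfl⟩
  | union _ _ ihG ihH =>
    obtain ⟨s, rfl⟩ := ihG
    obtain ⟨t, rfl⟩ := ihH
    exact ⟨union s t, rfl⟩

def map {k' : ℕ} (f : Fin k → Fin k') : DeltaTerm k → DeltaTerm k'
  | inst j => inst (f j)
  | empty => empty
  | compl t => compl (t.map f)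
  | union s t => union (s.map f) (t.map f)

theorem eval_map {k' : ℕ} (f : Fin k → Fin k') (t : DeltaTerm k) (bs : Fin k' → Fin ny → U) :
    (t.map f).eval φ bs = t.eval φ (bs ∘ f) := by
  induction t with
  | inst j => rfl
  | empty => rfl
  | compl t ih => simp only [map, eval, ih]
  | union s t ihs iht => simp only [map, eval, ihs, iht]

variable {φ} in
theorem exists_eval_eq_of_inPhiAlg {s : Set (Fin nx → U)} (h : InPhiAlg φ s) :
    ∃ (k : ℕ) (t : DeltaTerm k) (bs : Fin k → Fin ny → U), t.eval φ bs = s := by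
  induction h with
  | basic b => exact ⟨1, inst 0, fun _ => b, rfl⟩
  | empty => exact ⟨0, empty, finZeroElim, rfl⟩
  | compl _ ih =>
    obtain ⟨k, t, bs, rfl⟩ := ih
    exact ⟨k, compl t, bs, rfl⟩
  | union _ _ ihs iht =>
    obtain ⟨k₁, t₁, bs₁, rfl⟩ := ihs
    obtain ⟨k₂, t₂, bs₂, rfl⟩ := iht
    refine ⟨k₁ + k₂, union (t₁.map (Fin.castAdd k₂)) (t₂.map (Fin.natAdd k₁)),
      Fin.append bs₁ bs₂, ?_⟩
    have h₁ : Fin.append bs₁ bs₂ ∘ Fin.castAdd k₂ = bs₁ := funext (Fin.append_left bs₁ bs₂)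
    have h₂ : Fin.append bs₁ bs₂ ∘ Fin.natAdd k₁ = bs₂ := funext (Fin.append_right bs₁ bs₂)
    simp only [eval, eval_map, h₁, h₂]

def toFormula : DeltaTerm k → L.Formula (Fin nx ⊕ (Fin k × Fin ny))
  | inst j => φ.relabel (Sum.map id fun r => (j, r))
  | empty => ⊥
  | compl t => (t.toFormula).not
  | union s t => s.toFormula ⊔ t.toFormula

theorem realize_toFormula (t : DeltaTerm k) (a : Fin nx → U) (b : Fin k × Fin ny → U) :
    (t.toFormula φ).Realize (Sum.elim a b) ↔ a ∈ t.eval φ (Function.curry b) := by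
  induction t with
  | inst j =>
    simp only [toFormula, Language.Formula.realize_relabel, Sum.elim_comp_map]
    rfl
  | empty => simp [toFormula, eval]
  | compl t ih => simp [toFormula, eval, ih]
  | union s t ihs iht => simp [toFormula, eval, ihs, iht]

end DeltaTerm

theorem Finset.exists_forall_of_finite_cover {ι X Y : Type*} [Finite ι]
    (InPiece : Y → ι → Prop) (hcover : ∀ y, ∃ i, InPiece y i) (P : Y → Prop)
    (R : X → Y → Prop) (h : ∀ F : Finset X, ∃ y, P y ∧ ∀ x ∈ F, R x y) :
    ∃ i, ∀ F : Finset X, ∃ y, InPiece y i ∧ P y ∧ ∀ x ∈ F, R x y := by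
  classical
  have := Fintype.ofFinite ι
  by_contra! hpiece
  choose F hF using hpiece
  obtain ⟨y, hPy, hRy⟩ := h (Finset.univ.biUnion F)
  obtain ⟨i, hi⟩ := hcover y
  obtain ⟨x, hx, hRx⟩ := hF i y hi hPy
  exact hRx (hRy x (Finset.mem_biUnion.2 ⟨i, Finset.mem_univ i, hx⟩))

namespace IsSaturated

variable {U : Type} [L.Structure U] {κ : Cardinal.{0}}

theorem exists_realize {α ι : Type} [Finite α] (hsat : IsSaturated L U κ) (hι : #ι < κ)
    (c : ι → U) (S : Set (L.Formula (α ⊕ ι)))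
    (hS : ∀ s : Finset (L.Formula (α ⊕ ι)), ↑s ⊆ S →
      ∃ b : α → U, ∀ ψ ∈ s, ψ.Realize (Sum.elim b c)) :
    ∃ b : α → U, ∀ ψ ∈ S, ψ.Realize (Sum.elim b c) := by
  classical
  obtain ⟨n, ⟨e⟩⟩ := Finite.exists_equiv_fin α
  let r : L.Formula (α ⊕ ι) → L.Formula (Fin n ⊕ ι) := fun ψ => ψ.relabel (Sum.map e id)
  have hr : ∀ ψ a, (r ψ).Realize (Sum.elim a c) ↔ ψ.Realize (Sum.elim (a ∘ e) c) := by
    intro ψ a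
    simp only [r, Language.Formula.realize_relabel, Sum.elim_comp_map,
      Function.comp_id]
  obtain ⟨a, ha⟩ := hsat ι hι c n (r '' S) fun s hs => by
    obtain ⟨s', hs', rfl⟩ := Finset.subset_set_image_iff.1 hs
    obtain ⟨b, hb⟩ := hS s' hs'
    refine ⟨b ∘ e.symm, ?_⟩
    simp only [Finset.mem_image, forall_exists_index, and_imp, forall_apply_eq_imp_iff₂, hr]
    simpa [Function.comp_assoc] using hb
  exact ⟨a ∘ e, fun ψ hψ => (hr ψ a).1 (ha _ ⟨ψ, hψ, rfl⟩)⟩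

theorem exists_realize_forall_not_realize (hsat : IsSaturated L U κ)
    {M : L.ElementarySubstructure U} (hM : #M < κ) {α : Type} [Finite α] {nx j : ℕ}
    (ρ : L.Formula (α ⊕ Fin j)) (c : Fin j → M) (θ : L.Formula (Fin nx ⊕ α))
    (h : ∀ F : Finset (Fin nx → M), ∃ b : α → U, ρ.Realize (Sum.elim b fun s => (c s : U)) ∧
      ∀ a ∈ F, ¬θ.Realize (Sum.elim (fun i => (a i : U)) b)) :
    ∃ b : α → U, ρ.Realize (Sum.elim b fun s => (c s : U)) ∧
      ∀ a : Fin nx → M, ¬θ.Realize (Sum.elim (fun i => (a i : U)) b) := by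
  classical
  let g : Option (Fin nx → M) → L.Formula (α ⊕ M) := fun o =>
    o.elim (ρ.relabel (Sum.map id c)) fun a => (θ.relabel (Sum.elim (Sum.inr ∘ a) Sum.inl)).not
  have hg : ∀ o b, (g o).Realize (Sum.elim b (↑)) ↔
      o.elim (ρ.Realize (Sum.elim b fun s => (c s : U)))
        fun a => ¬θ.Realize (Sum.elim (fun i => (a i : U)) b) := by
    rintro (_ | a) b <;>
      simp only [g, Option.elim, Language.Formula.realize_relabel,
        Language.Formula.realize_not, Sum.elim_comp_map, Sum.comp_elim] <;> rfl
  obtain ⟨b, hb⟩ := hsat.exists_realize hM (↑) (Set.range g) fun s hs => by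
    obtain ⟨s', -, rfl⟩ := Finset.subset_set_image_iff.1 (Set.image_univ (f := g) ▸ hs)
    obtain ⟨b, hρ, hθ⟩ := h (Finset.eraseNone s')
    refine ⟨b, ?_⟩
    simp only [Finset.mem_image, forall_exists_index, and_imp, forall_apply_eq_imp_iff₂, hg]
    rintro (_ | a) ha
    · exact hρ
    · exact hθ a (Finset.mem_eraseNone.2 ha)
  exact ⟨b, (hg none b).1 (hb _ ⟨none, rfl⟩), fun a => (hg (some a) b).1 (hb _ ⟨some a, rfl⟩)⟩

end IsSaturated

namespace KeislerMeasure

variable {U : Type} [L.Structure U] {nx ny k : ℕ}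
  {φ : L.Formula (Fin nx ⊕ Fin ny)} (μ : KeislerMeasure U φ) {M : L.ElementarySubstructure U}
  {G : (Fin k → Fin ny → U) → Set (Fin nx → U)} {ε : ℝ}

/-- The clause of `DefinableOver` for a single `θ ∈ Δ_φ` and a single `ε`. -/
def DefinableWithin (M : L.ElementarySubstructure U)
    (G : (Fin k → Fin ny → U) → Set (Fin nx → U)) (ε : ℝ) : Prop :=
  ∃ (m j : ℕ) (ρ : Fin m → L.Formula ((Fin k × Fin ny) ⊕ Fin j)) (c : Fin j → M),
    (∀ bs : Fin k → Fin ny → U, ∃! i : Fin m,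
      (ρ i).Realize (Sum.elim (fun q => bs q.1 q.2) (fun t => (c t : U)))) ∧
    ∀ i : Fin m, ∀ e e' : Fin k → Fin ny → U,
      (ρ i).Realize (Sum.elim (fun q => e q.1 q.2) (fun t => (c t : U))) →
      (ρ i).Realize (Sum.elim (fun q => e' q.1 q.2) (fun t => (c t : U))) →
      |μ.toFun (G e) - μ.toFun (G e')| < ε

def IsNet (M : L.ElementarySubstructure U) (G : (Fin k → Fin ny → U) → Set (Fin nx → U))
    (ε : ℝ) (F : Finset (Fin nx → M)) : Prop :=
  ∀ bs, ε ≤ μ.toFun (G bs) → ∃ a ∈ F, (fun i => (a i : U)) ∈ G bs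

variable {μ}

theorem DefinableWithin.mono {ε' : ℝ} (h : μ.DefinableWithin M G ε) (hε : ε ≤ ε') :
    μ.DefinableWithin M G ε' := by
  obtain ⟨m, j, ρ, c, hpart, hvar⟩ := h
  exact ⟨m, j, ρ, c, hpart, fun i e e' he he' => (hvar i e e' he he').trans_le hε⟩

theorem DefinableWithin.exists_finite_support (h : μ.DefinableWithin M G ε) :
    ∃ D : Set U, D.Finite ∧ D ⊆ M ∧
      ∀ M₀ : L.ElementarySubstructure U, D ⊆ M₀ → μ.DefinableWithin M₀ G ε := by
  obtain ⟨m, j, ρ, c, hpart, hvar⟩ := h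
  refine ⟨Set.range fun s => (c s : U), Set.finite_range _,
    Set.range_subset_iff.2 fun s => (c s).2, fun M₀ hM₀ => ?_⟩
  exact ⟨m, j, ρ, fun s => ⟨c s, hM₀ ⟨s, rfl⟩⟩, hpart, hvar⟩

theorem IsNet.exists_finite_support {F : Finset (Fin nx → M)} (h : μ.IsNet M G ε F) :
    ∃ D : Set U, D.Finite ∧ D ⊆ M ∧
      ∀ M₀ : L.ElementarySubstructure U, D ⊆ M₀ → ∃ F₀, μ.IsNet M₀ G ε F₀ := by
  classical
  refine ⟨⋃ a ∈ F, Set.range fun i => (a i : U),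
    F.finite_toSet.biUnion fun a _ => Set.finite_range _, ?_, fun M₀ hM₀ => ?_⟩
  · simp only [Set.iUnion_subset_iff, Set.range_subset_iff]
    exact fun a _ i => (a i).2
  · let lift : F → (Fin nx → M₀) := fun a i => ⟨a.1 i, hM₀ (Set.mem_biUnion a.2 ⟨i, rfl⟩)⟩
    refine ⟨F.attach.image lift, fun bs hbs => ?_⟩
    obtain ⟨a, ha, hmem⟩ := h bs hbs
    exact ⟨lift ⟨a, ha⟩, Finset.mem_image_of_mem _ (F.mem_attach _), hmem⟩

variable (μ) in
theorem exists_isNet {κ : Cardinal.{0}} (hsat : IsSaturated L U κ) (hM : #M < κ)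
    (hdef : DefinableOver φ M μ) (hfs : FinSat φ M μ) (t : DeltaTerm k) (hε : 0 < ε) :
    ∃ F, μ.IsNet M (t.eval φ) ε F := by
  by_contra! hnet
  have hnet' : ∀ F : Finset (Fin nx → M), ∃ bs, ε ≤ μ.toFun (t.eval φ bs) ∧
      ∀ a ∈ F, (fun i => (a i : U)) ∉ t.eval φ bs := by
    simpa [IsNet] using hnet
  obtain ⟨m, j, ρ, c, hpart, hvar⟩ := hdef k _ (t.inDeltaPhi_eval φ) ε hε
  obtain ⟨i, hi⟩ := Finset.exists_forall_of_finite_cover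
    (fun bs i => (ρ i).Realize (Sum.elim (fun q => bs q.1 q.2) fun s => (c s : U)))
    (fun bs => (hpart bs).exists) _ _ hnet'
  obtain ⟨bs₀, hbs₀, hlarge, -⟩ := hi ∅
  obtain ⟨b, hb, hnot⟩ := hsat.exists_realize_forall_not_realize hM (ρ i) c (t.toFormula φ)
    fun F => by
      obtain ⟨bs, hbs, -, hF⟩ := hi F
      exact ⟨Function.uncurry bs, hbs, fun a ha => (t.realize_toFormula φ _ _).not.2 (hF a ha)⟩
  -- `b` lies in the piece of `bs₀`, so `θ(x;b)` has positive measure.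
  have hpos : 0 < μ.toFun (t.eval φ (Function.curry b)) := by
    have := hvar i (Function.curry b) bs₀ hb hbs₀
    linarith [abs_lt.1 this]
  obtain ⟨a, ha⟩ := hfs _ (t.inPhiAlg_eval φ _) hpos
  exact hnot a ((t.realize_toFormula φ _ _).2 ha)

end KeislerMeasure

open KeislerMeasure in
theorem GenericallyStable.exists_finite_support {U : Type} [L.Structure U] {κ : Cardinal.{0}}
    (hsat : IsSaturated L U κ)
    {M : L.ElementarySubstructure U} (hM : #M < κ) {nx ny k : ℕ}
    {φ : L.Formula (Fin nx ⊕ Fin ny)} {μ : KeislerMeasure U φ} (hgs : GenericallyStable φ M μ)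
    (t : DeltaTerm k) {ε : ℝ} (hε : 0 < ε) :
    ∃ D : Set U, D.Finite ∧ D ⊆ M ∧ ∀ M₀ : L.ElementarySubstructure U, D ⊆ M₀ →
      μ.DefinableWithin M₀ (t.eval φ) ε ∧ ∃ F, μ.IsNet M₀ (t.eval φ) ε F := by
  obtain ⟨D₁, hD₁, hD₁M, h₁⟩ :=
    DefinableWithin.exists_finite_support (hgs.1 k _ (t.inDeltaPhi_eval φ) ε hε)
  obtain ⟨F, hF⟩ := μ.exists_isNet hsat hM hgs.1 hgs.2 t hε
  obtain ⟨D₂, hD₂, hD₂M, h₂⟩ := hF.exists_finite_support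
  exact ⟨D₁ ∪ D₂, hD₁.union hD₂, Set.union_subset hD₁M hD₂M, fun M₀ h =>
    ⟨h₁ M₀ (Set.subset_union_left.trans h), h₂ M₀ (Set.subset_union_right.trans h)⟩⟩

theorem stmt_15_general
    {L : FirstOrder.Language.{0, 0}}
    (hL : L.card ≤ Cardinal.aleph0)
    {U : Type} [L.Structure U]
    (κ : Cardinal.{0})
    (hsat : IsSaturated L U κ)
    (hUinf : Infinite U)
    (M : L.ElementarySubstructure U) (hM : #M < κ)
    {nx ny : ℕ} (φ : L.Formula (Fin nx ⊕ Fin ny))    (μ : KeislerMeasure U φ)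
    (hgs : GenericallyStable φ M μ) :
    ∃ M₀ : L.ElementarySubstructure U, M₀.toSubstructure ≤ M.toSubstructure ∧
      #M₀ = Cardinal.aleph0 ∧ GenericallyStable φ M₀ μ := by
  have : Infinite M := M.elementarilyEquivalent.infinite_iff.2 hUinf
  choose D hDfin hDM hD using fun p : (k : ℕ) × DeltaTerm k × ℕ =>
    hgs.exists_finite_support hsat hM p.2.1 (Nat.one_div_pos_of_nat (n := p.2.2))
  obtain ⟨M₀, hM₀M, hcard, hDM₀⟩ := M.exists_le_card_eq (⋃ p, D p) (Set.iUnion_subset hDM)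
    ℵ₀ le_rfl (Set.countable_iUnion fun p => (hDfin p).countable).le_aleph0 hL
    (Cardinal.aleph0_le_mk M)
  have hD₀ := fun p => hD p M₀ ((Set.subset_iUnion D p).trans hDM₀)
  refine ⟨M₀, hM₀M, hcard, fun k G hG ε hε => ?_, fun s hs hpos => ?_⟩
  · obtain ⟨t, rfl⟩ := DeltaTerm.exists_eval_eq_of_inDeltaPhi hG
    obtain ⟨n, hn⟩ := exists_nat_one_div_lt hε
    exact (hD₀ ⟨k, t, n⟩).1.mono hn.le
  · obtain ⟨k, t, bs, rfl⟩ := DeltaTerm.exists_eval_eq_of_inPhiAlg hs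
    obtain ⟨n, hn⟩ := exists_nat_one_div_lt hpos
    obtain ⟨F, hF⟩ := (hD₀ ⟨k, t, n⟩).2
    obtain ⟨a, -, ha⟩ := hF bs hn.le
    exact ⟨a, ha⟩

/-- **Proposition 4.15.** If `μ ∈ 𝔐_φ(U)` is generically stable over `M`, then there is a
countable elementary substructure `M₀ ≺ M` such that `μ` is generically stable over `M₀`. -/
theorem stmt_15
    {L : FirstOrder.Language.{0, 0}} (T : L.Theory) (hT : T.IsComplete)
    (hL : L.card ≤ Cardinal.aleph0)
    {U : Type} [L.Structure U] [Nonempty U] (hUT : T.Model U)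
    (κ : Cardinal.{0}) (hκ : Cardinal.aleph0 < κ) (hreg : κ.IsRegular)
    (hsat : IsSaturated L U κ) (hhom : IsStronglyHomogeneous L U κ)
    (hUinf : Infinite U)
    (M : L.ElementarySubstructure U) (hM : #M < κ)
    {nx ny : ℕ} (φ : L.Formula (Fin nx ⊕ Fin ny))    (μ : KeislerMeasure U φ)
    (hgs : GenericallyStable φ M μ) :
    ∃ M₀ : L.ElementarySubstructure U, M₀.toSubstructure ≤ M.toSubstructure ∧
      #M₀ = Cardinal.aleph0 ∧ GenericallyStable φ M₀ μ :=
  stmt_15_general hL κ hsat hUinf M hM φ μ hgs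
end
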